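/- For every ε > 0, a closed equilateral triangle of side length 2 + ε in ℝ² cannot be covered by 5 closed unit equilateral triangles (with arbitrary orientations allowed). -/
import Mathlib


noncomputable section

abbrev Pt : Type := EuclideanSpace ℝ (Fin 2)

/-- `T` is a closed equilateral triangle of side length `s`: the convex hull of
three points at pairwise distance `s > 0`. -/
def IsEquilateralTriangle (T : Set Pt) (s : ℝ) : Prop :=
  0 < s ∧ ∃ A B C : Pt, dist A B = s ∧ dist B C = s ∧ dist C A = s ∧
    T = convexHull ℝ {A, B, C}

lemma dist_mid_mid (A B C : Pt) :
    dist (midpoint ℝ A B) (midpoint ℝ B C) = dist A C / 2 := by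
  rw [dist_eq_norm, dist_eq_norm]
  have h : midpoint ℝ A B - midpoint ℝ B C = (2:ℝ)⁻¹ • (A - C) := by
    rw [midpoint_eq_smul_add, midpoint_eq_smul_add]
    simp only [invOf_eq_inv]
    module
  rw [h, norm_smul]
  simp
  ring

/-- Any point of a unit equilateral triangle is within distance 1 of any other. -/
lemma unit_diam {U : Set Pt} (h : IsEquilateralTriangle U 1)
    {x y : Pt} (hx : x ∈ U) (hy : y ∈ U) : dist x y ≤ 1 := by
  obtain ⟨-, a, b, c, hab, hbc, hca, hU⟩ := h
  subst hU
  have hfin : ({a, b, c} : Set Pt).Finite :=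
    ((Set.finite_singleton c).insert b).insert a
  have hb : Bornology.IsBounded (convexHull ℝ ({a, b, c} : Set Pt)) :=
    isBounded_convexHull.mpr hfin.isBounded
  have hd : Metric.diam (convexHull ℝ ({a, b, c} : Set Pt)) ≤ 1 := by
    rw [convexHull_diam]
    apply Metric.diam_le_of_forall_dist_le zero_le_one
    intro x hx y hy
    have hba : dist b a = 1 := by rw [dist_comm]; exact hab
    have hcb : dist c b = 1 := by rw [dist_comm]; exact hbc
    have hac : dist a c = 1 := by rw [dist_comm]; exact hca
    simp only [Set.mem_insert_iff, Set.mem_singleton_iff] at hx hy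
    rcases hx with rfl | rfl | rfl <;> rcases hy with rfl | rfl | rfl <;>
      simp_all [dist_self]
  calc dist x y ≤ Metric.diam (convexHull ℝ ({a, b, c} : Set Pt)) :=
        Metric.dist_le_diam_of_mem hb hx hy
    _ ≤ 1 := hd

set_option maxHeartbeats 2000000 in
/-- An equilateral triangle of side length 2 + ε cannot be covered by 5 unit
equilateral triangles (arbitrary orientations allowed). -/
theorem statement10 (ε : ℝ) (hε : 0 < ε)
    (T : Set Pt) (hT : IsEquilateralTriangle T (2 + ε)) :
    ¬ ∃ S : Fin 5 → Set Pt,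
      (∀ i, IsEquilateralTriangle (S i) 1) ∧ T ⊆ ⋃ i, S i := by
  rintro ⟨S, hS, hcov⟩
  obtain ⟨hs, A, B, C, hAB, hBC, hCA, hTeq⟩ := hT
  set s : ℝ := 2 + ε with hsdef
  set M1 := midpoint ℝ A B with hM1def
  set M2 := midpoint ℝ B C with hM2def
  set M3 := midpoint ℝ C A with hM3def
  set p : Fin 6 → Pt := ![A, B, C, M1, M2, M3] with hp
  have h2 : ‖(2:ℝ)‖⁻¹ = (1:ℝ)/2 := by norm_num
  -- symmetric side lengths
  have hBA : dist B A = s := by rw [dist_comm]; exact hAB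
  have hCB : dist C B = s := by rw [dist_comm]; exact hBC
  have hAC : dist A C = s := by rw [dist_comm]; exact hCA
  -- vertex to adjacent midpoint
  have hAM1 : dist A M1 = s / 2 := by
    rw [hM1def, dist_left_midpoint (𝕜 := ℝ), h2, hAB]; ring
  have hBM1 : dist B M1 = s / 2 := by
    rw [hM1def, dist_right_midpoint (𝕜 := ℝ), h2, hAB]; ring
  have hBM2 : dist B M2 = s / 2 := by
    rw [hM2def, dist_left_midpoint (𝕜 := ℝ), h2, hBC]; ring
  have hCM2 : dist C M2 = s / 2 := by
    rw [hM2def, dist_right_midpoint (𝕜 := ℝ), h2, hBC]; ring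
  have hCM3 : dist C M3 = s / 2 := by
    rw [hM3def, dist_left_midpoint (𝕜 := ℝ), h2, hCA]; ring
  have hAM3 : dist A M3 = s / 2 := by
    rw [hM3def, dist_right_midpoint (𝕜 := ℝ), h2, hCA]; ring
  have hM1A : dist M1 A = s / 2 := by rw [dist_comm]; exact hAM1
  have hM1B : dist M1 B = s / 2 := by rw [dist_comm]; exact hBM1
  have hM2B : dist M2 B = s / 2 := by rw [dist_comm]; exact hBM2
  have hM2C : dist M2 C = s / 2 := by rw [dist_comm]; exact hCM2
  have hM3C : dist M3 C = s / 2 := by rw [dist_comm]; exact hCM3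
  have hM3A : dist M3 A = s / 2 := by rw [dist_comm]; exact hAM3
  -- midpoint to midpoint
  have hM12 : dist M1 M2 = s / 2 := by
    rw [hM1def, hM2def, dist_mid_mid, hAC]
  have hM23 : dist M2 M3 = s / 2 := by
    rw [hM2def, hM3def, dist_mid_mid, hBA]
  have hM31 : dist M3 M1 = s / 2 := by
    rw [hM3def, hM1def, dist_mid_mid, hCB]
  have hM21 : dist M2 M1 = s / 2 := by rw [dist_comm]; exact hM12
  have hM32 : dist M3 M2 = s / 2 := by rw [dist_comm]; exact hM23
  have hM13 : dist M1 M3 = s / 2 := by rw [dist_comm]; exact hM31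
  -- vertex to opposite midpoint (median), lower bound
  have hAM2 : s / 2 ≤ dist A M2 := by
    have := dist_triangle A M2 B
    rw [hM2B, hAB] at this; linarith
  have hBM3 : s / 2 ≤ dist B M3 := by
    have := dist_triangle B M3 C
    rw [hM3C, hBC] at this; linarith
  have hCM1 : s / 2 ≤ dist C M1 := by
    have := dist_triangle C M1 A
    rw [hM1A, hCA] at this; linarith
  have hM2A : s / 2 ≤ dist M2 A := by rw [dist_comm]; exact hAM2
  have hM3B : s / 2 ≤ dist M3 B := by rw [dist_comm]; exact hBM3
  have hM1C : s / 2 ≤ dist M1 C := by rw [dist_comm]; exact hCM1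
  have hone : (1:ℝ) < s / 2 := by rw [hsdef]; linarith
  have hp0 : (![A, B, C, M1, M2, M3] : Fin 6 → Pt) 0 = A := rfl
  have hp1 : (![A, B, C, M1, M2, M3] : Fin 6 → Pt) 1 = B := rfl
  have hp2 : (![A, B, C, M1, M2, M3] : Fin 6 → Pt) 2 = C := rfl
  have hp3 : (![A, B, C, M1, M2, M3] : Fin 6 → Pt) 3 = M1 := rfl
  have hp4 : (![A, B, C, M1, M2, M3] : Fin 6 → Pt) 4 = M2 := rfl
  have hp5 : (![A, B, C, M1, M2, M3] : Fin 6 → Pt) 5 = M3 := rfl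
  -- all pairwise distances exceed 1
  have hsep : ∀ i j : Fin 6, i ≠ j → 1 < dist (p i) (p j) := by
    intro i j hij
    fin_cases i <;> fin_cases j <;>
      simp only [hp, Nat.succ_eq_add_one, Nat.reduceAdd, Fin.reduceFinMk, Fin.isValue,
        hp0, hp1, hp2, hp3, hp4, hp5] <;>
      first
        | exact absurd rfl hij
        | linarith
  -- all six points lie in T
  have hconv : Convex ℝ T := hTeq ▸ convex_convexHull ℝ _
  have hA : A ∈ T := hTeq ▸ subset_convexHull ℝ _ (by simp)
  have hB : B ∈ T := hTeq ▸ subset_convexHull ℝ _ (by simp)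
  have hC : C ∈ T := hTeq ▸ subset_convexHull ℝ _ (by simp)
  have hmem : ∀ i, p i ∈ T := by
    intro i
    fin_cases i <;>
      simp only [hp, Nat.succ_eq_add_one, Nat.reduceAdd, Fin.reduceFinMk, Fin.isValue,
        hp0, hp1, hp2, hp3, hp4, hp5]
    · exact hA
    · exact hB
    · exact hC
    · exact hconv.segment_subset hA hB (midpoint_mem_segment A B)
    · exact hconv.segment_subset hB hC (midpoint_mem_segment B C)
    · exact hconv.segment_subset hC hA (midpoint_mem_segment C A)
  -- pigeonhole
  have hchoice : ∀ i : Fin 6, ∃ k : Fin 5, p i ∈ S k := by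
    intro i
    have := hcov (hmem i)
    simpa using this
  choose f hf using hchoice
  obtain ⟨i, j, hij, hfij⟩ := Fintype.exists_ne_map_eq_of_card_lt f (by norm_num)
  have h1 : dist (p i) (p j) ≤ 1 := unit_diam (hS (f i)) (hf i) (hfij ▸ hf j)
  exact absurd h1 (not_le.mpr (hsep i j hij))
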